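/- arXiv:1812.11061 — 3 statements merged into one kernel-verified Lean document; each statement's English description precedes it below -/
import Mathlib

section
/- Let x_0, x* ∈ {0,1}^n with Hamming distance H(x*, x_0) ≥ n/4, and let x be obtained from x_0 by ℓ ≥ 1 independent applications of standard-bit mutation with rate 1/n (each application flips each bit independently with probability 1/n). Then Pr[x = x*] ≤ (ℓ/(n-1))^{n/4} (assume n ≥ 2). -/
open MeasureTheory
open scoped ENNReal

/-- Let `x₀, x* ∈ {0,1}ⁿ` with Hamming distance at least `n/4`, and let `x`
be obtained from `x₀` by `ℓ ≥ 1` independent applications of standard-bit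
mutation with rate `1/n` (each of the `ℓ·n` flip indicators is an independent
Bernoulli(1/n); bit `i` of the result equals `x₀ i` xor the parity of the
number of steps flipping bit `i`).  Then `Pr[x = x*] ≤ (ℓ/(n-1))^{n/4}`. -/
theorem stmt_4 (n ℓ : ℕ) (hn : 2 ≤ n) (hℓ : 1 ≤ ℓ)
    (x0 xstar : Fin n → Bool)
    (hH : (n : ℝ) / 4 ≤ hammingDist x0 xstar) :
    (Measure.pi fun _ : Fin ℓ × Fin n =>
        (PMF.bernoulli ((n : NNReal))⁻¹
          (inv_le_one_of_one_le₀ (by exact_mod_cast Nat.one_le_of_lt hn))).toMeasure)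
      {ω : Fin ℓ × Fin n → Bool |
        (fun i : Fin n =>
          xor (x0 i)
            (decide (Odd (Finset.univ.filter (fun s : Fin ℓ => ω (s, i) = true)).card)))
          = xstar}
      ≤ ENNReal.ofReal (((ℓ : ℝ) / ((n : ℝ) - 1)) ^ ((n : ℝ) / 4)) := by
  have hp1 : ((n : ℝ≥0∞))⁻¹ ≤ 1 :=
    ENNReal.inv_le_one.mpr (by exact_mod_cast Nat.one_le_of_lt hn)
  set p : ℝ≥0∞ := ((n : ℝ≥0∞))⁻¹ with hpdef
  have hq1 : ((n : NNReal))⁻¹ ≤ 1 :=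
    inv_le_one_of_one_le₀ (by exact_mod_cast Nat.one_le_of_lt hn)
  have hq : (((n : NNReal))⁻¹ : NNReal) = (p : ℝ≥0∞) := by
    rw [ENNReal.coe_inv (by have : (0:NNReal) < n := by exact_mod_cast (by omega : 0 < n)
                            exact this.ne'), hpdef]
    simp
  set μB : Measure Bool := (PMF.bernoulli ((n : NNReal))⁻¹ hq1).toMeasure with hμB
  set r : ℝ := (ℓ : ℝ) / ((n : ℝ) - 1) with hrdef
  have hn1 : (0 : ℝ) < (n : ℝ) - 1 := by
    have : (2 : ℝ) ≤ (n : ℝ) := by exact_mod_cast hn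
    linarith
  have hr0 : 0 < r := div_pos (by exact_mod_cast hℓ) hn1
  have hnexp : (0 : ℝ) ≤ (n : ℝ) / 4 := by positivity
  -- probability measure instances
  have hprobB : IsProbabilityMeasure μB := PMF.toMeasure.isProbabilityMeasure _
  by_cases hr : r ≤ 1
  · -- hard case
    set ν : Measure (Fin ℓ → Bool) := Measure.pi fun _ : Fin ℓ => μB with hν
    set φ : (Fin ℓ × Fin n → Bool) → (Fin n → Fin ℓ → Bool) := fun ω i s => ω (s, i) with hφdef
    have hφ : Measurable φ :=
      measurable_pi_lambda _ fun i => measurable_pi_lambda _ fun s => measurable_pi_apply (s, i)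
    have hmap : (Measure.pi fun _ : Fin ℓ × Fin n => μB).map φ
        = Measure.pi fun _ : Fin n => ν := by
      apply Measure.ext_of_singleton
      intro y
      rw [Measure.map_apply hφ .of_discrete]
      have h1 : φ ⁻¹' {y}
          = Set.pi Set.univ fun q : Fin ℓ × Fin n => ({y q.2 q.1} : Set Bool) := by
        ext ω
        simp only [Set.mem_preimage, Set.mem_singleton_iff, Set.mem_pi, Set.mem_univ,
          true_implies]
        constructor
        · intro h q
          exact congrFun (congrFun h q.2) q.1
        · intro h
          funext i s
          exact h (s, i)
      have h3 : ∀ i, ν {y i} = ∏ s : Fin ℓ, μB {y i s} := by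
        intro i
        have : ({y i} : Set (Fin ℓ → Bool)) = Set.pi Set.univ fun s => ({y i s} : Set Bool) := by
          ext z; simp [funext_iff, Set.mem_pi]
        rw [hν, this, Measure.pi_pi]
      have h2 : ({y} : Set (Fin n → Fin ℓ → Bool))
          = Set.pi Set.univ fun i => ({y i} : Set (Fin ℓ → Bool)) := by
        ext z; simp [funext_iff, Set.mem_pi]
      rw [h1, h2, Measure.pi_pi, Measure.pi_pi]
      simp_rw [h3]
      rw [Fintype.prod_prod_type]
      exact Finset.prod_comm
    set G : Fin n → Set (Fin ℓ → Bool) :=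
      fun i => {y | x0 i ≠ xstar i → ∃ s, y s = true} with hG
    have hsub : {ω : Fin ℓ × Fin n → Bool |
        (fun i : Fin n =>
          xor (x0 i)
            (decide (Odd (Finset.univ.filter (fun s : Fin ℓ => ω (s, i) = true)).card)))
          = xstar} ⊆ φ ⁻¹' Set.pi Set.univ G := by
      intro ω hω
      intro i _
      intro hne
      have := congrFun hω i
      by_contra hall
      push_neg at hall
      have hfilter : (Finset.univ.filter (fun s : Fin ℓ => ω (s, i) = true)) = ∅ := by
        apply Finset.filter_eq_empty_iff.mpr
        intro s _
        simpa [hφdef] using hall s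
      rw [hfilter] at this
      simp at this
      exact hne (by rw [← this])
    have key : ∀ i, ν (G i) ≤ if x0 i = xstar i then 1 else ENNReal.ofReal r := by
      intro i
      by_cases hi : x0 i = xstar i
      · simp only [hi, if_true]
        haveI : IsProbabilityMeasure ν := by infer_instance
        exact prob_le_one
      · simp only [hi, if_false]
        have hGi : G i ⊆ ⋃ s : Fin ℓ, {y : Fin ℓ → Bool | y s = true} := by
          intro y hy
          obtain ⟨s, hs⟩ := hy hi
          exact Set.mem_iUnion.mpr ⟨s, hs⟩
        have hsingle : ∀ s : Fin ℓ, ν {y : Fin ℓ → Bool | y s = true} = p := by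
          intro s
          have : {y : Fin ℓ → Bool | y s = true}
              = Set.pi Set.univ fun t => if t = s then ({true} : Set Bool) else Set.univ := by
            ext y
            simp only [Set.mem_setOf_eq, Set.mem_pi, Set.mem_univ, true_implies]
            constructor
            · intro h t
              by_cases ht : t = s <;> simp [ht, h]
            · intro h
              have := h s
              simpa using this
          rw [hν, this, Measure.pi_pi]
          have : ∀ t : Fin ℓ, μB (if t = s then ({true} : Set Bool) else Set.univ)
              = if t = s then p else 1 := by
            intro t
            by_cases ht : t = s
            · simp only [ht, if_true]
              rw [hμB, PMF.toMeasure_apply_singleton _ _ (measurableSet_singleton _)]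
              simp [PMF.bernoulli_apply, hq]
            · rw [if_neg ht, if_neg ht, measure_univ]
          simp_rw [this]
          simp
        calc ν (G i) ≤ ν (⋃ s : Fin ℓ, {y : Fin ℓ → Bool | y s = true}) := measure_mono hGi
          _ ≤ ∑' s : Fin ℓ, ν {y : Fin ℓ → Bool | y s = true} := measure_iUnion_le _
          _ = ∑ s : Fin ℓ, p := by rw [tsum_fintype]; simp [hsingle]
          _ = (ℓ : ℝ≥0∞) * p := by simp [Finset.sum_const, mul_comm]
          _ ≤ ENNReal.ofReal r := by
              have hcast : ((n : ℝ) - 1) = ((n - 1 : ℕ) : ℝ) := by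
                have : (1 : ℕ) ≤ n := by omega
                push_cast [this]
                ring
              rw [hrdef, hcast, ENNReal.ofReal_div_of_pos (by exact_mod_cast hn1.trans_le hcast.le),
                ENNReal.ofReal_natCast, ENNReal.ofReal_natCast]
              rw [ENNReal.div_eq_inv_mul, mul_comm (ℓ : ℝ≥0∞) p]
              apply mul_le_mul_left
              rw [hpdef]
              exact ENNReal.inv_le_inv.mpr (by exact_mod_cast Nat.sub_le n 1)
    calc (Measure.pi fun _ : Fin ℓ × Fin n => μB) {ω : Fin ℓ × Fin n → Bool |
        (fun i : Fin n =>
          xor (x0 i)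
            (decide (Odd (Finset.univ.filter (fun s : Fin ℓ => ω (s, i) = true)).card)))
          = xstar}
        ≤ (Measure.pi fun _ : Fin ℓ × Fin n => μB) (φ ⁻¹' Set.pi Set.univ G) :=
          measure_mono hsub
      _ = (Measure.pi fun _ : Fin n => ν) (Set.pi Set.univ G) := by
          rw [← hmap, Measure.map_apply hφ .of_discrete]
      _ = ∏ i, ν (G i) := Measure.pi_pi _ _
      _ ≤ ∏ i, (if x0 i = xstar i then 1 else ENNReal.ofReal r) :=
          Finset.prod_le_prod' fun i _ => key i
      _ = ENNReal.ofReal r ^ (hammingDist x0 xstar) := by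
          rw [Finset.prod_ite, Finset.prod_const, Finset.prod_const, one_pow, one_mul]
          congr 1
      _ ≤ ENNReal.ofReal (r ^ ((n : ℝ) / 4)) := by
          rw [← ENNReal.ofReal_pow hr0.le]
          apply ENNReal.ofReal_le_ofReal
          rw [← Real.rpow_natCast r (hammingDist x0 xstar)]
          exact Real.rpow_le_rpow_of_exponent_ge hr0 hr hH
  · -- easy case: r > 1
    push_neg at hr
    have h1 : (1 : ℝ≥0∞) ≤ ENNReal.ofReal (r ^ ((n : ℝ) / 4)) := by
      rw [ENNReal.one_le_ofReal]
      exact Real.one_le_rpow hr.le hnexp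
    haveI : IsProbabilityMeasure (Measure.pi fun _ : Fin ℓ × Fin n => μB) := by infer_instance
    exact le_trans prob_le_one h1
end

section
/- Let λ, μ be positive reals with λ/μ ≥ e^e and let γ = floor( ln(λ/μ) / (2 ln ln(λ/μ)) ). Then γ ≥ 1 and for all integers i with 0 ≤ i ≤ n - n/ln(λ/μ), we have ((n·γ)/(n-i))^γ ≤ λ/μ. -/
/-- Phase-1 calculation: for positive reals `λ, μ` with `λ/μ ≥ e^e` and
`γ = ⌊ln(λ/μ) / (2 ln ln(λ/μ))⌋`, we have `γ ≥ 1`, and for every integer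
`0 ≤ i ≤ n - n/ln(λ/μ)` it holds that `((n·γ)/(n-i))^γ ≤ λ/μ`. -/
theorem stmt_10 (lam mu : ℝ) (hlam : 0 < lam) (hmu : 0 < mu)
    (h : lam / mu ≥ Real.exp 1 ^ Real.exp 1) (n : ℕ)
    (γ : ℕ) (hγ : γ = ⌊Real.log (lam / mu) / (2 * Real.log (Real.log (lam / mu)))⌋₊) :
    1 ≤ γ ∧ ∀ i : ℕ, (i : ℝ) ≤ (n : ℝ) - (n : ℝ) / Real.log (lam / mu) →
      (((n : ℝ) * γ) / ((n : ℝ) - i)) ^ γ ≤ lam / mu := by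
  have hrm : 0 < lam / mu := div_pos hlam hmu
  set L := Real.log (lam / mu) with hLdef
  have hee : Real.exp 1 ^ Real.exp 1 = Real.exp (Real.exp 1) := Real.exp_one_rpow _
  have hL : Real.exp 1 ≤ L := by
    rw [hLdef]
    calc Real.exp 1 = Real.log (Real.exp (Real.exp 1)) := (Real.log_exp _).symm
    _ ≤ Real.log (lam / mu) := Real.log_le_log (Real.exp_pos _) (hee ▸ h)
  have he2 : (2:ℝ) ≤ Real.exp 1 := by
    have := Real.add_one_le_exp (1:ℝ); linarith
  have hLpos : (0:ℝ) < L := lt_of_lt_of_le (Real.exp_pos 1) hL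
  have hL1 : (1:ℝ) < L := lt_of_lt_of_le (by linarith) hL
  have hlogL1 : (1:ℝ) ≤ Real.log L := by
    calc (1:ℝ) = Real.log (Real.exp 1) := (Real.log_exp 1).symm
    _ ≤ Real.log L := Real.log_le_log (Real.exp_pos _) hL
  have hlogLpos : (0:ℝ) < Real.log L := by linarith
  -- 2 log L ≤ L
  have h2logL : 2 * Real.log L ≤ L := by
    have h1 : Real.log (L / Real.exp 1) ≤ L / Real.exp 1 - 1 :=
      Real.log_le_sub_one_of_pos (div_pos hLpos (Real.exp_pos 1))
    have h2 : Real.log (L / Real.exp 1) = Real.log L - 1 := by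
      rw [Real.log_div (ne_of_gt hLpos) (ne_of_gt (Real.exp_pos 1)), Real.log_exp]
    have h3 : Real.log L ≤ L / Real.exp 1 := by linarith
    have h4 : L / Real.exp 1 ≤ L / 2 :=
      div_le_div_of_nonneg_left (le_of_lt hLpos) (by norm_num) he2
    linarith
  have hγ1 : 1 ≤ γ := by
    rw [hγ]
    apply Nat.le_floor
    rw [Nat.cast_one, le_div_iff₀ (by linarith)]
    linarith
  have hγle : (γ : ℝ) ≤ L / (2 * Real.log L) := by
    rw [hγ]
    exact Nat.floor_le (by positivity)
  have hγpos : (0:ℝ) < γ := by exact_mod_cast hγ1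
  -- key: (L * γ)^γ ≤ lam/mu
  have hLγ1 : (1:ℝ) ≤ L * γ := by
    nlinarith [mul_le_mul_of_nonneg_left (show (1:ℝ) ≤ γ from by exact_mod_cast hγ1) hLpos.le]
  have hkey : (L * (γ:ℝ)) ^ γ ≤ lam / mu := by
    have hLγpos : (0:ℝ) < L * γ := by linarith
    have hlogLγ : Real.log (L * γ) ≤ 2 * Real.log L := by
      have hγL : (γ:ℝ) ≤ L := le_trans hγle (by
        rw [div_le_iff₀ (by linarith)]; nlinarith)
      calc Real.log (L * γ) ≤ Real.log (L * L) :=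
            Real.log_le_log hLγpos (by nlinarith)
      _ = 2 * Real.log L := by
            rw [Real.log_mul (ne_of_gt hLpos) (ne_of_gt hLpos)]; ring
    have hmul : (γ:ℝ) * Real.log (L * γ) ≤ L := by
      have hnn : 0 ≤ Real.log (L * γ) := Real.log_nonneg hLγ1
      calc (γ:ℝ) * Real.log (L * γ) ≤ (L / (2 * Real.log L)) * (2 * Real.log L) :=
            mul_le_mul hγle hlogLγ hnn (by positivity)
      _ = L := by field_simp
    calc (L * (γ:ℝ)) ^ γ = Real.exp ((γ:ℝ) * Real.log (L * γ)) := by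
          rw [← Real.log_pow, Real.exp_log (pow_pos hLγpos γ)]
    _ ≤ Real.exp L := Real.exp_le_exp.mpr hmul
    _ = lam / mu := Real.exp_log hrm
  refine ⟨hγ1, fun i hi => ?_⟩
  rcases Nat.eq_zero_or_pos n with hn | hn
  · subst hn
    simp only [Nat.cast_zero, zero_div, sub_zero, zero_mul] at hi ⊢
    rw [zero_pow (by omega : γ ≠ 0)]
    exact hrm.le
  · have hnpos : (0:ℝ) < n := by exact_mod_cast hn
    have hnL : (0:ℝ) < (n:ℝ) / L := div_pos hnpos hLpos
    have hni : (n:ℝ) / L ≤ (n:ℝ) - i := by linarith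
    have hnipos : (0:ℝ) < (n:ℝ) - i := lt_of_lt_of_le hnL hni
    have hbase : ((n:ℝ) * γ) / ((n:ℝ) - i) ≤ L * γ := by
      calc ((n:ℝ) * γ) / ((n:ℝ) - i) ≤ ((n:ℝ) * γ) / ((n:ℝ) / L) :=
            div_le_div_of_nonneg_left (by positivity) hnL hni
      _ = L * γ := by field_simp
    calc (((n:ℝ) * γ) / ((n:ℝ) - i)) ^ γ ≤ (L * (γ:ℝ)) ^ γ :=
          pow_le_pow_left₀ (by positivity) hbase γ
    _ ≤ lam / mu := hkey
end

section
/- Let t = floor(μn/(8eλ)) with μ, λ, n positive integers, n ≥ 8 and eλt ≤ μn/8. For every integer ℓ with 1 ≤ ℓ ≤ t, define s(ℓ) = C(t,ℓ)·(λ/μ)^ℓ·min{1, (ℓ/(n-1))^{n/4}}. Then s(ℓ) ≤ (1/2)^{n/4} for all 1 ≤ ℓ ≤ t. -/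
/-- Key summand estimate in the `Ω(μn/λ)` lower bound: with
`t = ⌊μn/(8eλ)⌋` (so in particular `eλt ≤ μn/8`) and `n ≥ 8`, for every
`1 ≤ ℓ ≤ t` the summand
`s(ℓ) = C(t,ℓ)·(λ/μ)^ℓ·min{1, (ℓ/(n-1))^{n/4}}` satisfies
`s(ℓ) ≤ (1/2)^{n/4}`. -/
theorem stmt_17 (n mu lam : ℕ) (hn : 8 ≤ n) (hmu : 0 < mu) (hlam : 0 < lam)
    (t : ℕ) (ht : t = ⌊(mu : ℝ) * n / (8 * Real.exp 1 * lam)⌋₊)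
    (ht' : Real.exp 1 * lam * t ≤ (mu : ℝ) * n / 8)
    (ℓ : ℕ) (hℓ1 : 1 ≤ ℓ) (hℓt : ℓ ≤ t) :
    (t.choose ℓ : ℝ) * ((lam : ℝ) / mu) ^ ℓ *
        min 1 (((ℓ : ℝ) / ((n : ℝ) - 1)) ^ ((n : ℝ) / 4))
      ≤ (1 / 2 : ℝ) ^ ((n : ℝ) / 4) := by
  have hℓpos : (0:ℝ) < ℓ := by exact_mod_cast hℓ1
  have hmupos : (0:ℝ) < mu := by exact_mod_cast hmu
  have hlampos : (0:ℝ) < lam := by exact_mod_cast hlam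
  have hnpos : (0:ℝ) < n := by positivity
  have hn8 : (8:ℝ) ≤ n := by exact_mod_cast hn
  have he : (0:ℝ) < Real.exp 1 := Real.exp_pos 1
  have htpos : (0:ℝ) ≤ t := by positivity
  have hn1 : (0:ℝ) < (n:ℝ) - 1 := by linarith
  -- Step 1: choose bound:  C(t,ℓ) ≤ (e t / ℓ)^ℓ
  have hc1 : (t.choose ℓ : ℝ) ≤ (t:ℝ)^ℓ / (Nat.factorial ℓ) := by
    have := Nat.choose_le_pow_div (α := ℝ) ℓ t
    push_cast at this ⊢
    exact this
  have hfac : (0:ℝ) < (Nat.factorial ℓ : ℝ) := by exact_mod_cast (Nat.factorial_pos ℓ)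
  have hc2 : (ℓ:ℝ)^ℓ / (Nat.factorial ℓ) ≤ Real.exp ℓ :=
    Real.pow_div_factorial_le_exp (x := (ℓ:ℝ)) (by positivity) ℓ
  have hkey : (ℓ:ℝ)^ℓ ≤ Real.exp ℓ * (Nat.factorial ℓ) := (div_le_iff₀ hfac).mp hc2
  have hexp : Real.exp (ℓ:ℝ) = (Real.exp 1)^ℓ := by
    rw [← Real.exp_one_rpow (ℓ:ℝ), Real.rpow_natCast]
  have hchoose : (t.choose ℓ : ℝ) ≤ (Real.exp 1 * t / ℓ)^ℓ := by
    calc (t.choose ℓ : ℝ) ≤ (t:ℝ)^ℓ / (Nat.factorial ℓ) := hc1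
      _ ≤ (t:ℝ)^ℓ * Real.exp ℓ / (ℓ:ℝ)^ℓ := by
          rw [div_le_div_iff₀ hfac (by positivity)]
          nlinarith [mul_le_mul_of_nonneg_left hkey (pow_nonneg htpos ℓ)]
      _ = (Real.exp 1 * t / ℓ)^ℓ := by rw [hexp, div_pow, mul_pow]; ring
  -- Step 2: A := C(t,ℓ)(λ/μ)^ℓ ≤ (n/(8ℓ))^ℓ
  have hbase : Real.exp 1 * t / ℓ * ((lam:ℝ)/mu) ≤ (n:ℝ) / (8*ℓ) := by
    rw [div_mul_div_comm, div_le_div_iff₀ (by positivity) (by positivity)]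
    nlinarith [mul_le_mul_of_nonneg_right ht' (mul_pos hℓpos hmupos).le]
  have hA : (t.choose ℓ : ℝ) * ((lam:ℝ)/mu)^ℓ ≤ ((n:ℝ)/(8*ℓ))^ℓ := by
    calc (t.choose ℓ : ℝ) * ((lam:ℝ)/mu)^ℓ
        ≤ (Real.exp 1 * t / ℓ)^ℓ * ((lam:ℝ)/mu)^ℓ := by
          apply mul_le_mul_of_nonneg_right hchoose (by positivity)
      _ = (Real.exp 1 * t / ℓ * ((lam:ℝ)/mu))^ℓ := (mul_pow _ _ _).symm
      _ ≤ ((n:ℝ)/(8*ℓ))^ℓ := pow_le_pow_left₀ (by positivity) hbase ℓ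
  have hApos : (0:ℝ) ≤ (t.choose ℓ : ℝ) * ((lam:ℝ)/mu)^ℓ := by positivity
  rcases le_or_gt ((n:ℝ)/4) (ℓ:ℝ) with hcase | hcase
  · -- ℓ ≥ n/4 : A ≤ (1/2)^ℓ ≤ (1/2)^{n/4}, min ≤ 1
    have h12 : (n:ℝ)/(8*ℓ) ≤ 1/2 := by
      rw [div_le_div_iff₀ (by positivity) (by norm_num)]
      linarith
    have : (t.choose ℓ : ℝ) * ((lam:ℝ)/mu)^ℓ ≤ (1/2:ℝ)^(ℓ:ℝ) := by
      rw [Real.rpow_natCast]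
      exact hA.trans (pow_le_pow_left₀ (by positivity) h12 ℓ)
    calc (t.choose ℓ : ℝ) * ((lam : ℝ) / mu) ^ ℓ *
          min 1 (((ℓ : ℝ) / ((n : ℝ) - 1)) ^ ((n : ℝ) / 4))
        ≤ (t.choose ℓ : ℝ) * ((lam : ℝ) / mu) ^ ℓ * 1 :=
          mul_le_mul_of_nonneg_left (min_le_left _ _) hApos
      _ = (t.choose ℓ : ℝ) * ((lam : ℝ) / mu) ^ ℓ := mul_one _
      _ ≤ (1/2:ℝ)^(ℓ:ℝ) := this
      _ ≤ (1/2:ℝ)^((n:ℝ)/4) := by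
          apply Real.rpow_le_rpow_of_exponent_ge (by norm_num) (by norm_num) hcase
  · -- ℓ < n/4
    have hmin : min 1 (((ℓ : ℝ) / ((n : ℝ) - 1)) ^ ((n : ℝ) / 4))
        ≤ ((ℓ : ℝ) / ((n : ℝ) - 1)) ^ ((n : ℝ) / 4) := min_le_right _ _
    rcases le_or_gt ((n:ℝ)/(8*ℓ)) 1 with h8 | h8
    · -- A ≤ 1, and ℓ/(n-1) ≤ 1/2
      have hA1 : (t.choose ℓ : ℝ) * ((lam:ℝ)/mu)^ℓ ≤ 1 :=
        hA.trans (by calc ((n:ℝ)/(8*ℓ))^ℓ ≤ 1^ℓ := pow_le_pow_left₀ (by positivity) h8 ℓ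
                      _ = 1 := one_pow ℓ)
      have hhalf : (ℓ:ℝ)/((n:ℝ)-1) ≤ 1/2 := by
        rw [div_le_div_iff₀ hn1 (by norm_num)]
        linarith
      calc (t.choose ℓ : ℝ) * ((lam : ℝ) / mu) ^ ℓ *
            min 1 (((ℓ : ℝ) / ((n : ℝ) - 1)) ^ ((n : ℝ) / 4))
          ≤ 1 * (((ℓ : ℝ) / ((n : ℝ) - 1)) ^ ((n : ℝ) / 4)) := by
            apply mul_le_mul hA1 hmin (le_min (by norm_num) (by positivity)) (by norm_num)
        _ = ((ℓ : ℝ) / ((n : ℝ) - 1)) ^ ((n : ℝ) / 4) := one_mul _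
        _ ≤ (1/2:ℝ)^((n:ℝ)/4) :=
            Real.rpow_le_rpow (by positivity) hhalf (by positivity)
    · -- base > 1
      have hA2 : (t.choose ℓ : ℝ) * ((lam:ℝ)/mu)^ℓ ≤ ((n:ℝ)/(8*ℓ))^((n:ℝ)/4) := by
        refine hA.trans ?_
        rw [← Real.rpow_natCast ((n:ℝ)/(8*ℓ)) ℓ]
        exact Real.rpow_le_rpow_of_exponent_le h8.le hcase.le
      have hprod : ((n:ℝ)/(8*ℓ))^((n:ℝ)/4) * (((ℓ:ℝ)/((n:ℝ)-1))^((n:ℝ)/4))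
          = ((n:ℝ)/(8*((n:ℝ)-1)))^((n:ℝ)/4) := by
        rw [← Real.mul_rpow (by positivity) (by positivity)]
        congr 1
        field_simp
      have hh : (n:ℝ)/(8*((n:ℝ)-1)) ≤ 1/2 := by
        rw [div_le_div_iff₀ (by linarith) (by norm_num)]
        linarith
      calc (t.choose ℓ : ℝ) * ((lam : ℝ) / mu) ^ ℓ *
            min 1 (((ℓ : ℝ) / ((n : ℝ) - 1)) ^ ((n : ℝ) / 4))
          ≤ ((n:ℝ)/(8*ℓ))^((n:ℝ)/4) * (((ℓ:ℝ)/((n:ℝ)-1))^((n:ℝ)/4)) := by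
            apply mul_le_mul hA2 hmin (le_min (by norm_num) (by positivity)) (by positivity)
        _ = ((n:ℝ)/(8*((n:ℝ)-1)))^((n:ℝ)/4) := hprod
        _ ≤ (1/2:ℝ)^((n:ℝ)/4) :=
            Real.rpow_le_rpow (by positivity) hh (by positivity)
end
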